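/- Let Z be a random vector in ℝ^d with 𝔼Z = 0 and 𝔼‖Z‖₂² < ∞, and let θ > 0. Then ‖ 𝔼[ Z · min(‖Z‖₂², 1/θ)/‖Z‖₂² ] ‖₂ ≤ √( θ·‖Σ₀‖·tr(Σ₀) ), where Σ₀ = 𝔼[Z Zᵀ] (with the convention that the integrand is 0 on the event Z = 0). -/

import Mathlib

open MeasureTheory ProbabilityTheory Matrix Real
open scoped InnerProductSpace

noncomputable section

/-- Vectors in `ℝ^d` with the Euclidean norm. -/
abbrev Vec (d : ℕ) := EuclideanSpace ℝ (Fin d)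

/-- Real `d × d` matrices. -/
abbrev Mat (d : ℕ) := Matrix (Fin d) (Fin d) ℝ

variable {d : ℕ}

/-- Operator (spectral) norm of a square matrix. -/
noncomputable def opNorm (A : Mat d) : ℝ := ‖Matrix.toEuclideanCLM (𝕜 := ℝ) A‖

/-- Frobenius (Hilbert–Schmidt) norm. -/
noncomputable def frobNorm (A : Mat d) : ℝ := Real.sqrt (∑ i, ∑ j, (A i j) ^ 2)

/-- Nuclear norm `‖A‖₁ = tr √(AᵀA)`. -/
noncomputable def nuclearNorm (A : Mat d) : ℝ :=
  (((Matrix.posSemidef_conjTranspose_mul_self A).1.eigenvectorUnitary : Mat d) *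
    Matrix.diagonal (Real.sqrt ∘ (Matrix.posSemidef_conjTranspose_mul_self A).1.eigenvalues) *
    star ((Matrix.posSemidef_conjTranspose_mul_self A).1.eigenvectorUnitary : Mat d)).trace

/-- Outer product `v vᵀ`. -/
def outer (v : Vec d) : Mat d := Matrix.of fun i j => v i * v j

/-- Entrywise expectation of a random matrix. -/
noncomputable def matExp {Ω : Type*} [MeasurableSpace Ω] (P : Measure Ω) (F : Ω → Mat d) : Mat d :=
  Matrix.of fun i j => ∫ ω, F ω i j ∂P

/-- The truncation function `ψ(x) = sign(x) · min(|x|, 1)`. -/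
noncomputable def psi (x : ℝ) : ℝ := Real.sign x * min |x| 1

/-- Mean vector `μ₀ = 𝔼 X`. -/
noncomputable def meanVec {Ω : Type*} [MeasurableSpace Ω] (P : Measure Ω) (X : Ω → Vec d) : Vec d :=
  ∫ ω, X ω ∂P

/-- Covariance matrix `Σ₀ = 𝔼[(X−μ₀)(X−μ₀)ᵀ]`. -/
noncomputable def covMat {Ω : Type*} [MeasurableSpace Ω] (P : Measure Ω) (X : Ω → Vec d) : Mat d :=
  matExp P (fun ω => outer (X ω - meanVec P X))

/-- `σ₀ = ‖𝔼[‖X−μ₀‖₂² (X−μ₀)(X−μ₀)ᵀ]‖^{1/2}`. -/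
noncomputable def sigma0 {Ω : Type*} [MeasurableSpace Ω] (P : Measure Ω) (X : Ω → Vec d) : ℝ :=
  Real.sqrt (opNorm (matExp P
    (fun ω => ‖X ω - meanVec P X‖ ^ 2 • outer (X ω - meanVec P X))))

/-- Intrinsic dimension `d̄ = σ₀²/‖Σ₀‖²`. -/
noncomputable def dbar {Ω : Type*} [MeasurableSpace Ω] (P : Measure Ω) (X : Ω → Vec d) : ℝ :=
  (sigma0 P X) ^ 2 / (opNorm (covMat P X)) ^ 2

/-- The truncated covariance estimator
`Σ̂(θ) = (mθ)⁻¹ ∑ᵢ ψ(θ‖Xᵢ−μ̂‖₂²) (Xᵢ−μ̂)(Xᵢ−μ̂)ᵀ/‖Xᵢ−μ̂‖₂²`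
(a summand being `0` when `Xᵢ = μ̂`, by the `0/0 = 0` convention). -/
noncomputable def truncCov {Ω : Type*} (m : ℕ) (X : Fin m → Ω → Vec d)
    (muhat : Ω → Vec d) (θ : ℝ) (ω : Ω) : Mat d :=
  (1 / (m * θ)) •
    ∑ i, (psi (θ * ‖X i ω - muhat ω‖ ^ 2) / ‖X i ω - muhat ω‖ ^ 2) • outer (X i ω - muhat ω)

/-- `μ̂` is a geometric median of the group means of the groups `G j` of the sample `X`:
it minimizes `z ↦ ∑ⱼ ‖z − μ̂ⱼ‖₂` where `μ̂ⱼ = |G j|⁻¹ ∑_{i ∈ G j} Xᵢ`. -/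
def IsMedianOfMeans {Ω : Type*} {m k : ℕ} (X : Fin m → Ω → Vec d)
    (G : Fin k → Finset (Fin m)) (muhat : Ω → Vec d) : Prop :=
  ∀ ω, ∀ z : Vec d,
    ∑ j, ‖muhat ω - ((G j).card : ℝ)⁻¹ • ∑ i ∈ G j, X i ω‖ ≤
      ∑ j, ‖z - ((G j).card : ℝ)⁻¹ • ∑ i ∈ G j, X i ω‖

/-- `θ_j = (1/σ_j)·√(β/m)` with `σ_j = σ_min 2^j`. -/
noncomputable def lepskiTheta (σmin β : ℝ) (m : ℕ) (j : ℤ) : ℝ :=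
  (1 / (σmin * 2 ^ j)) * Real.sqrt (β / m)

/-- The index set `𝒥 = {j ∈ ℤ : σ_min ≤ σ_min 2^j < 2 σ_max}`. -/
def lepskiJ (σmin σmax : ℝ) : Set ℤ :=
  {j : ℤ | σmin ≤ σmin * 2 ^ j ∧ σmin * 2 ^ j < 2 * σmax}

/-- `Σ̂_{m,j} = Σ̂(θ_j)`. -/
noncomputable def lepskiSig {Ω : Type*} (m : ℕ) (X : Fin m → Ω → Vec d) (muhat : Ω → Vec d)
    (σmin β : ℝ) (j : ℤ) (ω : Ω) : Mat d :=
  truncCov m X muhat (lepskiTheta σmin β m j) ω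

/-- `jstar ω` is the minimal `j ∈ 𝒥` such that for all `l ∈ 𝒥` with `l > j`,
`‖Σ̂_{m,l} − Σ̂_{m,j}‖ ≤ 6 σ_l √(β/m)`. -/
def IsLepskiIndex {Ω : Type*} {m : ℕ} (X : Fin m → Ω → Vec d) (muhat : Ω → Vec d)
    (σmin σmax β : ℝ) (jstar : Ω → ℤ) : Prop :=
  ∀ ω, jstar ω ∈ lepskiJ σmin σmax ∧
    (∀ l ∈ lepskiJ σmin σmax, jstar ω < l →
      opNorm (lepskiSig m X muhat σmin β l ω - lepskiSig m X muhat σmin β (jstar ω) ω) ≤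
        6 * (σmin * 2 ^ l) * Real.sqrt (β / m)) ∧
    (∀ j ∈ lepskiJ σmin σmax,
      (∀ l ∈ lepskiJ σmin σmax, j < l →
        opNorm (lepskiSig m X muhat σmin β l ω - lepskiSig m X muhat σmin β j ω) ≤
          6 * (σmin * 2 ^ l) * Real.sqrt (β / m)) →
      jstar ω ≤ j)

/-- Orthogonal projector onto the span of the (orthonormal eigen-)vectors `u 0, …, u (k-1)`. -/
noncomputable def projTop (k : ℕ) (u : Fin d → Fin d → ℝ) : Mat d :=
  ∑ i : Fin d, if (i : ℕ) < k then Matrix.of (fun a b => u i a * u i b) else (0 : Mat d)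

/-- Quadratic form `vᵀ M v`. -/
def quadForm (M : Mat d) (v : Vec d) : ℝ := ∑ i, ∑ j, v i * M i j * v j

/-- Matrix function `f(A) = U f(Λ) Uᵀ` defined through the spectral decomposition of a
Hermitian (real symmetric) matrix. -/
noncomputable def matApply (f : ℝ → ℝ) {A : Mat d} (hA : A.IsHermitian) : Mat d :=
  (hA.eigenvectorUnitary : Mat d) * Matrix.diagonal (f ∘ hA.eigenvalues) *
    star (hA.eigenvectorUnitary : Mat d)

end

/-!
Write the truncation weight as `1 - a` with `0 ≤ a ≤ 1` and `a ≤ θ‖Z‖₂²`. Since `𝔼Z = 0`, the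
bias is `-𝔼[aZ]`, and testing it against `v = 𝔼[aZ]` and applying Cauchy–Schwarz gives
`‖v‖² = 𝔼[a⟨v, Z⟩] ≤ √(𝔼a²) √(𝔼⟨v, Z⟩²) ≤ √(θ tr Σ₀) √(‖Σ₀‖) ‖v‖`.
-/

theorem integral_mul_le_sqrt_mul_sqrt {α : Type*} [MeasurableSpace α] {μ : Measure α}
    {f g : α → ℝ} (hf : MemLp f 2 μ) (hg : MemLp g 2 μ) :
    ∫ x, f x * g x ∂μ ≤ √(∫ x, f x ^ 2 ∂μ) * √(∫ x, g x ^ 2 ∂μ) := by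
  have hf' : MemLp f (ENNReal.ofReal 2) μ := by simpa using hf
  have hg' : MemLp g (ENNReal.ofReal 2) μ := by simpa using hg
  calc ∫ x, f x * g x ∂μ ≤ ∫ x, ‖f x‖ * ‖g x‖ ∂μ :=
        integral_mono (hf.integrable_mul hg) (hf.norm.integrable_mul hg.norm)
          fun x => by simpa [norm_mul] using le_abs_self (f x * g x)
    _ ≤ (∫ x, ‖f x‖ ^ (2 : ℝ) ∂μ) ^ (1 / 2 : ℝ) * (∫ x, ‖g x‖ ^ (2 : ℝ) ∂μ) ^ (1 / 2 : ℝ) :=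
        integral_mul_norm_le_Lp_mul_Lq .two_two hf' hg'
    _ = √(∫ x, f x ^ 2 ∂μ) * √(∫ x, g x ^ 2 ∂μ) := by
        simp [Real.sqrt_eq_rpow]

section SecondMoment

variable {d : ℕ}

theorem trace_outer (z : Vec d) : (outer z).trace = ‖z‖ ^ 2 := by
  rw [EuclideanSpace.real_norm_sq_eq]
  simp [Matrix.trace, outer, sq]

theorem quadForm_outer (z v : Vec d) : quadForm (outer z) v = ⟪v, z⟫_ℝ ^ 2 := by
  simp only [quadForm, outer, Matrix.of_apply, PiLp.inner_apply, RCLike.inner_apply,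
    conj_trivial, sq, Finset.sum_mul_sum]
  exact Finset.sum_congr rfl fun i _ => Finset.sum_congr rfl fun j _ => by ring

theorem quadForm_eq_inner (M : Mat d) (v : Vec d) :
    quadForm M v = ⟪v, Matrix.toEuclideanCLM (𝕜 := ℝ) M v⟫_ℝ := by
  have hMv (i : Fin d) : Matrix.toEuclideanCLM (𝕜 := ℝ) M v i = ∑ j, M i j * v j := rfl
  simp only [quadForm, PiLp.inner_apply, RCLike.inner_apply, conj_trivial, hMv, Finset.sum_mul]
  exact Finset.sum_congr rfl fun i _ => Finset.sum_congr rfl fun j _ => by ring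

theorem quadForm_le_opNorm_mul_norm_sq (M : Mat d) (v : Vec d) :
    quadForm M v ≤ opNorm M * ‖v‖ ^ 2 :=
  calc quadForm M v ≤ ‖v‖ * ‖Matrix.toEuclideanCLM (𝕜 := ℝ) M v‖ :=
        quadForm_eq_inner M v ▸ real_inner_le_norm _ _
    _ ≤ ‖v‖ * (opNorm M * ‖v‖) := by
        gcongr; exact (Matrix.toEuclideanCLM (𝕜 := ℝ) M).le_opNorm v
    _ = opNorm M * ‖v‖ ^ 2 := by ring

variable {Ω : Type*} [MeasurableSpace Ω] {P : Measure Ω}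

theorem trace_matExp {F : Ω → Mat d} (hF : ∀ i j, Integrable (fun ω => F ω i j) P) :
    (matExp P F).trace = ∫ ω, (F ω).trace ∂P := by
  simp only [Matrix.trace, Matrix.diag, matExp, Matrix.of_apply]
  rw [integral_finsetSum _ fun i _ => hF i i]

theorem quadForm_matExp {F : Ω → Mat d} (hF : ∀ i j, Integrable (fun ω => F ω i j) P)
    (v : Vec d) : quadForm (matExp P F) v = ∫ ω, quadForm (F ω) v ∂P := by
  simp only [quadForm, matExp, Matrix.of_apply]
  rw [integral_finsetSum _ fun i _ => integrable_finsetSum _ fun j _ =>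
    ((hF i j).const_mul _).mul_const _]
  refine Finset.sum_congr rfl fun i _ => ?_
  rw [integral_finsetSum _ fun j _ => ((hF i j).const_mul _).mul_const _]
  refine Finset.sum_congr rfl fun j _ => ?_
  rw [integral_mul_const, integral_const_mul]

theorem integrable_outer_apply {Z : Ω → Vec d} (hZ : MemLp Z 2 P) (i j : Fin d) :
    Integrable (fun ω => outer (Z ω) i j) P :=
  have hZ_apply (k : Fin d) : MemLp (fun ω => Z ω k) 2 P :=
    (EuclideanSpace.proj (𝕜 := ℝ) k).comp_memLp' hZ
  (hZ_apply i).integrable_mul (hZ_apply j)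

theorem norm_integral_smul_le {Z : Ω → Vec d} {a : Ω → ℝ} (hZ : MemLp Z 2 P) (ha : MemLp a 2 P) :
    ‖∫ ω, a ω • Z ω ∂P‖ ≤
      √(∫ ω, a ω ^ 2 ∂P) * √(opNorm (matExp P fun ω => outer (Z ω))) := by
  set v := ∫ ω, a ω • Z ω ∂P
  set C := √(∫ ω, a ω ^ 2 ∂P) * √(opNorm (matExp P fun ω => outer (Z ω)))
  have haZ : Integrable (fun ω => a ω • Z ω) P := memLp_one_iff_integrable.1 (hZ.smul ha)
  have hv_sq : ‖v‖ ^ 2 ≤ C * ‖v‖ := calc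
    ‖v‖ ^ 2 = ⟪v, v⟫_ℝ := (real_inner_self_eq_norm_sq v).symm
    _ = ∫ ω, a ω * ⟪v, Z ω⟫_ℝ ∂P := by
        rw [← integral_inner haZ]
        simp only [real_inner_smul_right]
    _ ≤ √(∫ ω, a ω ^ 2 ∂P) * √(∫ ω, ⟪v, Z ω⟫_ℝ ^ 2 ∂P) :=
        integral_mul_le_sqrt_mul_sqrt ha (hZ.const_inner v)
    _ ≤ √(∫ ω, a ω ^ 2 ∂P) * √(opNorm (matExp P fun ω => outer (Z ω)) * ‖v‖ ^ 2) := by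
        simp_rw [← quadForm_outer, ← quadForm_matExp (integrable_outer_apply hZ)]
        gcongr
        exact quadForm_le_opNorm_mul_norm_sq _ v
    _ = C * ‖v‖ := by
        rw [Real.sqrt_mul' _ (sq_nonneg _), Real.sqrt_sq (norm_nonneg v), mul_assoc]
  rcases (norm_nonneg v).eq_or_lt with hv | hv
  · rw [← hv]; positivity
  · nlinarith

end SecondMoment

/-- The deficit `1 - min(r, 1/θ)/r` of the truncation weight, written so that it is `0` at
`r = 0`. -/
noncomputable def truncDeficit (θ r : ℝ) : ℝ := (r - min r (1 / θ)) / r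

theorem measurable_truncDeficit (θ : ℝ) : Measurable (truncDeficit θ) := by
  unfold truncDeficit; fun_prop

theorem truncDeficit_nonneg {θ r : ℝ} (hr : 0 ≤ r) : 0 ≤ truncDeficit θ r :=
  div_nonneg (sub_nonneg.2 (min_le_left _ _)) hr

theorem truncDeficit_le_one {θ r : ℝ} (hθ : 0 ≤ θ) (hr : 0 ≤ r) : truncDeficit θ r ≤ 1 :=
  div_le_one_of_le₀ (sub_le_self _ (le_min hr (by positivity))) hr

theorem sq_truncDeficit_le {θ r : ℝ} (hθ : 0 < θ) (hr : 0 ≤ r) : truncDeficit θ r ^ 2 ≤ θ * r := by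
  have h0 := truncDeficit_nonneg (θ := θ) hr
  have h1 := truncDeficit_le_one hθ.le hr
  rcases le_or_gt r (1 / θ) with h | h
  · rw [truncDeficit, min_eq_left h, sub_self, zero_div, sq, zero_mul]; positivity
  · have : 1 < θ * r := by rwa [div_lt_iff₀ hθ, mul_comm] at h
    nlinarith

theorem truncWeight_smul_eq_sub {E : Type*} [NormedAddCommGroup E] [NormedSpace ℝ E]
    (θ : ℝ) (z : E) :
    (min (‖z‖ ^ 2) (1 / θ) / ‖z‖ ^ 2) • z = z - truncDeficit θ (‖z‖ ^ 2) • z := by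
  rcases eq_or_ne z 0 with rfl | hz
  · simp
  · have : ‖z‖ ^ 2 ≠ 0 := by positivity
    rw [truncDeficit, sub_div, div_self this, sub_smul, one_smul, sub_sub_cancel]

/-- bias bound for the truncated identity,
`‖𝔼[Z·min(‖Z‖₂²,1/θ)/‖Z‖₂²]‖₂ ≤ √(θ‖Σ₀‖tr(Σ₀))`. -/
theorem stmt19 {d : ℕ} {Ω : Type*} [MeasurableSpace Ω] (P : Measure Ω) [IsProbabilityMeasure P]
    (Z : Ω → Vec d) (θ : ℝ)
    (hmeas : Measurable Z)
    (hmom : Integrable (fun ω => ‖Z ω‖ ^ 2) P)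
    (hmean : (∫ ω, Z ω ∂P) = 0)
    (hθ : 0 < θ) :
    ‖∫ ω, (min (‖Z ω‖ ^ 2) (1 / θ) / ‖Z ω‖ ^ 2) • Z ω ∂P‖ ≤
      Real.sqrt (θ * opNorm (matExp P (fun ω => outer (Z ω))) *
        (matExp P (fun ω => outer (Z ω))).trace) := by
  have hZ : MemLp Z 2 P := (memLp_two_iff_integrable_sq_norm hmeas.aestronglyMeasurable).2 hmom
  set a := fun ω => truncDeficit θ (‖Z ω‖ ^ 2)
  have ha_meas : Measurable a := (measurable_truncDeficit θ).comp (hmeas.norm.pow_const 2)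
  have ha : MemLp a 2 P := by
    refine .of_bound ha_meas.aestronglyMeasurable 1 (ae_of_all _ fun ω => ?_)
    rw [Real.norm_of_nonneg (truncDeficit_nonneg (sq_nonneg _))]
    exact truncDeficit_le_one hθ.le (sq_nonneg _)
  have ha_sq : ∫ ω, a ω ^ 2 ∂P ≤ θ * (matExp P fun ω => outer (Z ω)).trace := by
    rw [trace_matExp (integrable_outer_apply hZ), ← integral_const_mul]
    simp_rw [trace_outer]
    exact integral_mono ha.integrable_sq (hmom.const_mul θ)
      fun ω => sq_truncDeficit_le hθ (sq_nonneg _)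
  have haZ : Integrable (fun ω => a ω • Z ω) P := memLp_one_iff_integrable.1 (hZ.smul ha)
  have hbias : ∫ ω, (min (‖Z ω‖ ^ 2) (1 / θ) / ‖Z ω‖ ^ 2) • Z ω ∂P = -∫ ω, a ω • Z ω ∂P :=
    calc _ = ∫ ω, Z ω - a ω • Z ω ∂P :=
          integral_congr_ae (ae_of_all _ fun ω => truncWeight_smul_eq_sub θ (Z ω))
      _ = -∫ ω, a ω • Z ω ∂P := by
          rw [integral_sub (hZ.integrable one_le_two) haZ, hmean, zero_sub]
  rw [hbias, norm_neg, mul_right_comm, Real.sqrt_mul' _ (by exact norm_nonneg _)]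
  calc ‖∫ ω, a ω • Z ω ∂P‖
      ≤ √(∫ ω, a ω ^ 2 ∂P) * √(opNorm (matExp P fun ω => outer (Z ω))) :=
        norm_integral_smul_le hZ ha
    _ ≤ _ := by gcongr
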